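/- For each i ∈ {1,2,3}, the fixed subgroup of the involutive automorphism g ↦ σ_i g σ_i of F_{4(-20)} equals the stabilizer of E_i: (F_{4(-20)})^{σ̃_i} = (F_{4(-20)})_{E_i}. In particular K = (F_{4(-20)})^{σ̃_1} = (F_{4(-20)})_{E_1} = Spin(9), and (F_{4(-20)})^{σ̃_2} = (F_{4(-20)})_{E_2} ≅ Spin^0(8,1). -/

import Mathlib

noncomputable section
/-! ## The octonions, realized via the Cayley–Dickson construction on the quaternions -/

/-- The octonions `𝕆 = ℍ ⊕ ℍ`. -/
abbrev Oct : Type := Quaternion ℝ × Quaternion ℝ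

/-- Octonion multiplication `(a,b)(c,d) = (ac - d̄b, da + bc̄)`. -/
def omul (x y : Oct) : Oct :=
  (x.1 * y.1 - star y.2 * x.2, y.2 * x.1 + x.2 * star y.1)

/-- Octonion conjugation `x ↦ x̄`. -/
def oconj (x : Oct) : Oct := (star x.1, -x.2)

/-- The unit octonion `1`. -/
def oone : Oct := (1, 0)

/-- The real (scalar) part `Re(x)` of an octonion. -/
def oRe (x : Oct) : ℝ := x.1.re

/-- The standard inner product `(x|y)` on the octonions. -/
def oinner (x y : Oct) : ℝ := (x.1 * star y.1).re + (x.2 * star y.2).re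

/-- The norm form `n(x) = (x|x)`. -/
def onorm (x : Oct) : ℝ := oinner x x

/-- The imaginary (vector) part `Im(x)` of an octonion. -/
def oIm (x : Oct) : Oct := x - oRe x • oone

theorem oRe_add (x y : Oct) : oRe (x + y) = oRe x + oRe y := by
  simp [oRe]

theorem oRe_sub (x y : Oct) : oRe (x - y) = oRe x - oRe y := by
  simp [oRe]

theorem oRe_smul (c : ℝ) (x : Oct) : oRe (c • x) = c * oRe x := by
  simp [oRe]

theorem oRe_oone : oRe oone = 1 := by
  simp [oRe, oone, Quaternion.re_one]

/-- The space `Im 𝕆` of imaginary octonions. -/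
def ImOct : Submodule ℝ Oct where
  carrier := {x | oRe x = 0}
  add_mem' := by
    intro a b ha hb
    simp only [Set.mem_setOf_eq] at *
    rw [oRe_add, ha, hb, add_zero]
  zero_mem' := by
    show oRe 0 = 0
    simp [oRe, Quaternion.re_zero]
  smul_mem' := by
    intro c x hx
    simp only [Set.mem_setOf_eq] at *
    rw [oRe_smul, hx, mul_zero]

theorem oIm_mem (z : Oct) : oIm z ∈ ImOct := by
  show oRe (oIm z) = 0
  show oRe (z - oRe z • oone) = 0
  rw [oRe_sub, oRe_smul, oRe_oone, mul_one, sub_self]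

theorem oinner_oone (x : Oct) : oinner x oone = oRe x := by
  simp [oinner, oone, oRe, Quaternion.re_zero]
/-! ## Small helper lemmas on the automorphism group of a module -/

theorem le_mul_apply {M : Type*} [AddCommMonoid M] [Module ℝ M] (a b : M ≃ₗ[ℝ] M) (x : M) :
    (a * b) x = a (b x) := rfl

theorem le_one_apply {M : Type*} [AddCommMonoid M] [Module ℝ M] (x : M) :
    (1 : M ≃ₗ[ℝ] M) x = x := rfl

theorem le_apply_inv_apply {M : Type*} [AddCommMonoid M] [Module ℝ M] (a : M ≃ₗ[ℝ] M) (z : M) :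
    a (a⁻¹ z) = z := by
  rw [← le_mul_apply, mul_inv_cancel, le_one_apply]

theorem le_inv_apply_apply {M : Type*} [AddCommMonoid M] [Module ℝ M] (a : M ≃ₗ[ℝ] M) (z : M) :
    a⁻¹ (a z) = z := by
  rw [← le_mul_apply, inv_mul_cancel, le_one_apply]
/-! ## The exceptional Jordan algebra `J¹`

`J¹` is the real vector space `ℝ³ ⊕ 𝕆³`, whose element `((ξ₁,ξ₂,ξ₃),(x₁,x₂,x₃))`
represents the twisted-hermitian matrix `h¹(ξ₁,ξ₂,ξ₃; x₁,x₂,x₃)`, i.e.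
`ξ₁E₁ + ξ₂E₂ + ξ₃E₃ + F¹₁(x₁) + F¹₂(x₂) + F¹₃(x₃)`. -/

abbrev J1 : Type := (ℝ × ℝ × ℝ) × (Oct × Oct × Oct)

/-- `jmk a b c x y z = h¹(a,b,c;x,y,z)`. -/
def jmk (a b c : ℝ) (x y z : Oct) : J1 := ((a, b, c), (x, y, z))

def ja1 (X : J1) : ℝ := X.1.1
def ja2 (X : J1) : ℝ := X.1.2.1
def ja3 (X : J1) : ℝ := X.1.2.2
def jx1 (X : J1) : Oct := X.2.1
def jx2 (X : J1) : Oct := X.2.2.1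
def jx3 (X : J1) : Oct := X.2.2.2

/-- The Jordan product `X ∘ Y = (XY + YX)/2` of `J¹`, written out in components
(obtained by multiplying the twisted-hermitian matrices `h¹(ξ;x)` and `h¹(η;y)`). -/
def jmul (X Y : J1) : J1 :=
  jmk
    (ja1 X * ja1 Y - oinner (jx2 X) (jx2 Y) - oinner (jx3 X) (jx3 Y))
    (ja2 X * ja2 Y + oinner (jx1 X) (jx1 Y) - oinner (jx3 X) (jx3 Y))
    (ja3 X * ja3 Y + oinner (jx1 X) (jx1 Y) - oinner (jx2 X) (jx2 Y))
    ((2:ℝ)⁻¹ • ((ja2 X + ja3 X) • jx1 Y + (ja2 Y + ja3 Y) • jx1 X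
      - (oconj (omul (jx2 Y) (jx3 X)) + oconj (omul (jx2 X) (jx3 Y)))))
    ((2:ℝ)⁻¹ • ((ja3 X + ja1 X) • jx2 Y + (ja3 Y + ja1 Y) • jx2 X
      + (oconj (omul (jx3 Y) (jx1 X)) + oconj (omul (jx3 X) (jx1 Y)))))
    ((2:ℝ)⁻¹ • ((ja1 X + ja2 X) • jx3 Y + (ja1 Y + ja2 Y) • jx3 X
      + (oconj (omul (jx1 Y) (jx2 X)) + oconj (omul (jx1 X) (jx2 Y)))))

/-- The trace. -/
def jtr (X : J1) : ℝ := ja1 X + ja2 X + ja3 X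

/-- The identity element `E`. -/
def jE : J1 := jmk 1 1 1 0 0 0

/-- The inner product `(X|Y) = tr(X ∘ Y)`. -/
def jinner (X Y : J1) : ℝ := jtr (jmul X Y)

/-- Freudenthal's cross product
`X × Y = (2 X∘Y − tr(X)Y − tr(Y)X + (tr(X)tr(Y) − (X|Y))E)/2`. -/
def jcross (X Y : J1) : J1 :=
  (2:ℝ)⁻¹ • ((2:ℝ) • jmul X Y - jtr X • Y - jtr Y • X + (jtr X * jtr Y - jinner X Y) • jE)

/-- `X^{×2} = X × X`. -/
def jsq (X : J1) : J1 := jcross X X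

/-- The determinant `det X = (X|X×X)/3`. -/
def jdet (X : J1) : ℝ := (3:ℝ)⁻¹ * jinner X (jcross X X)

/-- The characteristic polynomial `Φ_X(t) = det (tE − X)`. -/
def charP (X : J1) (t : ℝ) : ℝ := jdet (t • jE - X)

/-- The quadratic form `Q(X) = −tr(X^{×2})`. -/
def Qform (X : J1) : ℝ := - jtr (jsq X)

/-- The diagonal matrix units. -/
def jE1 : J1 := jmk 1 0 0 0 0 0
def jE2 : J1 := jmk 0 1 0 0 0 0
def jE3 : J1 := jmk 0 0 1 0 0 0

/-- The off-diagonal elements `F¹ᵢ(x)`. -/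
def jF1 (x : Oct) : J1 := jmk 0 0 0 x 0 0
def jF2 (x : Oct) : J1 := jmk 0 0 0 0 x 0
def jF3 (x : Oct) : J1 := jmk 0 0 0 0 0 x

/-- `diag(a,b,c)`. -/
def jdiag (a b c : ℝ) : J1 := jmk a b c 0 0 0

/-- `P⁺ = h¹(1,−1,0;0,0,1)`. -/
def Pplus : J1 := jmk 1 (-1) 0 0 0 oone

/-- `P⁻ = h¹(−1,1,0;0,0,1)`. -/
def Pminus : J1 := jmk (-1) 1 0 0 0 oone

/-- `Q⁺(x) = h¹(0,0,0;x,x̄,0)`. -/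
def Qplus (x : Oct) : J1 := jmk 0 0 0 x (oconj x) 0
/-! ## The exceptional Lie group `F₄₍₋₂₀₎` -/

/-- `F₄₍₋₂₀₎`, the automorphism group of the exceptional Jordan algebra `J¹`:
`{g ∈ GL_ℝ(J¹) | g(X ∘ Y) = gX ∘ gY}`. -/
def F4 : Subgroup (J1 ≃ₗ[ℝ] J1) where
  carrier := {g | ∀ X Y : J1, g (jmul X Y) = jmul (g X) (g Y)}
  one_mem' := by
    intro X Y
    rfl
  mul_mem' := by
    intro a b ha hb
    have ha' : ∀ X Y : J1, a (jmul X Y) = jmul (a X) (a Y) := ha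
    have hb' : ∀ X Y : J1, b (jmul X Y) = jmul (b X) (b Y) := hb
    intro X Y
    simp only [le_mul_apply]
    rw [hb', ha']
  inv_mem' := by
    intro a ha
    have ha' : ∀ X Y : J1, a (jmul X Y) = jmul (a X) (a Y) := ha
    intro X Y
    apply a.injective
    rw [le_apply_inv_apply, ha', le_apply_inv_apply, le_apply_inv_apply]

/-- The (full) stabilizer subgroup of an element `v` inside `GL_ℝ(J¹)`;
`F4 ⊓ fixSubgroup v` is the stabilizer `(F₄₍₋₂₀₎)_v`, and intersections
`F4 ⊓ fixSubgroup v₁ ⊓ ⋯ ⊓ fixSubgroup vₙ` are pointwise stabilizers. -/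
def fixSubgroup (v : J1) : Subgroup (J1 ≃ₗ[ℝ] J1) where
  carrier := {g | g v = v}
  one_mem' := by
    show (1 : J1 ≃ₗ[ℝ] J1) v = v
    rfl
  mul_mem' := by
    intro a b ha hb
    have ha' : a v = v := ha
    have hb' : b v = v := hb
    show (a * b) v = v
    rw [le_mul_apply, hb', ha']
  inv_mem' := by
    intro a ha
    have ha' : a v = v := ha
    show a⁻¹ v = v
    conv_lhs => rw [← ha']
    rw [le_inv_apply_apply]

/-- The `F₄₍₋₂₀₎`-orbit of `v ∈ J¹`. -/
def orbF4 (v : J1) : Set J1 := {w | ∃ g ∈ F4, g v = w}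
/-! ## Triality: the groups `SO(8)`, `Spin(8) = D̃₄`, `Spin(7) = B̃₃` -/

theorem oconj_oconj (x : Oct) : oconj (oconj x) = x := by
  simp [oconj]

/-- `SO(8)` acting on the octonions: the inner-product preserving linear
automorphisms of determinant `1`. -/
def SO8 : Subgroup (Oct ≃ₗ[ℝ] Oct) where
  carrier := {g | (∀ x y : Oct, oinner (g x) (g y) = oinner x y) ∧ LinearEquiv.det g = 1}
  one_mem' := by
    refine ⟨fun x y => rfl, ?_⟩
    exact map_one LinearEquiv.det
  mul_mem' := by
    intro a b ha hb
    obtain ⟨ha1, ha2⟩ := ha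
    obtain ⟨hb1, hb2⟩ := hb
    refine ⟨fun x y => ?_, ?_⟩
    · rw [le_mul_apply, le_mul_apply, ha1, hb1]
    · rw [map_mul, ha2, hb2, one_mul]
  inv_mem' := by
    intro a ha
    obtain ⟨ha1, ha2⟩ := ha
    refine ⟨fun x y => ?_, ?_⟩
    · conv_rhs => rw [← le_apply_inv_apply a x, ← le_apply_inv_apply a y]
      rw [ha1]
    · rw [map_inv, ha2, inv_one]

/-- Triples of rotations of the octonions. -/
abbrev G3 : Type := (Oct ≃ₗ[ℝ] Oct) × (Oct ≃ₗ[ℝ] Oct) × (Oct ≃ₗ[ℝ] Oct)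

/-- The triality relation `(g₁x)(g₂y) = ε g₃ ε (xy)`, where `ε x = x̄`. -/
def trialityCond (g : G3) : Prop :=
  ∀ x y : Oct, omul (g.1 x) (g.2.1 y) = oconj (g.2.2 (oconj (omul x y)))

/-- `Spin(8)` realized as the triality group
`D̃₄ = {(g₁,g₂,g₃) ∈ SO(8)³ | (g₁x)(g₂y) = ε g₃ ε (xy) for all x,y}`. -/
def D4t : Subgroup G3 where
  carrier := {g | g.1 ∈ SO8 ∧ g.2.1 ∈ SO8 ∧ g.2.2 ∈ SO8 ∧ trialityCond g}
  one_mem' := by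
    refine ⟨SO8.one_mem, SO8.one_mem, SO8.one_mem, fun x y => ?_⟩
    show omul x y = oconj ((1 : Oct ≃ₗ[ℝ] Oct) (oconj (omul x y)))
    rw [le_one_apply, oconj_oconj]
  mul_mem' := by
    intro a b ha hb
    obtain ⟨ha1, ha2, ha3, ha4⟩ := ha
    obtain ⟨hb1, hb2, hb3, hb4⟩ := hb
    refine ⟨SO8.mul_mem ha1 hb1, SO8.mul_mem ha2 hb2, SO8.mul_mem ha3 hb3, fun x y => ?_⟩
    show omul ((a.1 * b.1) x) ((a.2.1 * b.2.1) y)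
        = oconj ((a.2.2 * b.2.2) (oconj (omul x y)))
    rw [le_mul_apply, le_mul_apply, le_mul_apply, ha4, hb4, oconj_oconj]
  inv_mem' := by
    intro a ha
    obtain ⟨ha1, ha2, ha3, ha4⟩ := ha
    refine ⟨SO8.inv_mem ha1, SO8.inv_mem ha2, SO8.inv_mem ha3, fun x y => ?_⟩
    show omul ((a.1)⁻¹ x) ((a.2.1)⁻¹ y) = oconj ((a.2.2)⁻¹ (oconj (omul x y)))
    have h := ha4 ((a.1)⁻¹ x) ((a.2.1)⁻¹ y)
    rw [le_apply_inv_apply, le_apply_inv_apply] at h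
    rw [h, oconj_oconj, le_inv_apply_apply, oconj_oconj]

/-- `Spin(7)` realized as the triality group `B̃₃ = {(g₁,g₂,g₃) ∈ D̃₄ | g₃ 1 = 1}`. -/
def B3t : Subgroup G3 where
  carrier := {g | g ∈ D4t ∧ g.2.2 oone = oone}
  one_mem' := by
    refine ⟨D4t.one_mem, ?_⟩
    rfl
  mul_mem' := by
    intro a b ha hb
    refine ⟨D4t.mul_mem ha.1 hb.1, ?_⟩
    show (a.2.2 * b.2.2) oone = oone
    rw [le_mul_apply, hb.2, ha.2]
  inv_mem' := by
    intro a ha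
    refine ⟨D4t.inv_mem ha.1, ?_⟩
    show (a.2.2)⁻¹ oone = oone
    conv_lhs => rw [← ha.2]
    rw [le_inv_apply_apply]
/-! ## The embedding `φ₀` and the involutions `σᵢ` -/

/-- `φ₀(g₁,g₂,g₃)` sends `Σ(ξᵢEᵢ + F¹ᵢ(xᵢ))` to `Σ(ξᵢEᵢ + F¹ᵢ(gᵢxᵢ))`. -/
def phi0 (g : G3) : J1 ≃ₗ[ℝ] J1 :=
  (LinearEquiv.refl ℝ (ℝ × ℝ × ℝ)).prodCongr (g.1.prodCongr (g.2.1.prodCongr g.2.2))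

/-- Negation of the octonions as a linear automorphism. -/
def negOct : Oct ≃ₗ[ℝ] Oct := LinearEquiv.neg ℝ

/-- `σ₁ = σ`: fixes the diagonal and the `F¹₁`-component, negates `F¹₂`, `F¹₃`. -/
def sigma1 : J1 ≃ₗ[ℝ] J1 := phi0 (1, negOct, negOct)

/-- `σ₂`: fixes the diagonal and the `F¹₂`-component, negates `F¹₁`, `F¹₃`. -/
def sigma2 : J1 ≃ₗ[ℝ] J1 := phi0 (negOct, 1, negOct)

/-- `σ₃`: fixes the diagonal and the `F¹₃`-component, negates `F¹₁`, `F¹₂`. -/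
def sigma3 : J1 ≃ₗ[ℝ] J1 := phi0 (negOct, negOct, 1)

/-! An automorphism `g` commuting with `σᵢ` preserves both eigenspaces of `σᵢ`. Hence `g Eᵢ`, like
`Eᵢ`, is fixed by `σᵢ`, acts by `1/2` on the `(-1)`-eigenspace, and multiplies squares of that
eigenspace into its own line; a short computation shows that `Eᵢ` is the only such element, so
`g Eᵢ = Eᵢ`. Conversely `σᵢ = 1 - 8 Lᵢ + 8 Lᵢ²` for the multiplication `Lᵢ` by `Eᵢ`, so every
automorphism fixing `Eᵢ` commutes with `σᵢ`. The automorphism of `J¹` exchanging the indices `2`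
and `3` reduces the case `i = 3` to `i = 2` and conjugates the stabilizer of `E₂` onto that
of `E₃`. -/

section PeirceAdapted

variable {M : Type*} [AddCommGroup M] [Module ℝ M] (mul : M → M → M)

/-- The properties of `Eᵢ` relative to `σᵢ` that automorphisms commuting with `σᵢ` preserve;
in `J¹` they single out `Eᵢ`. -/
def PeirceAdapted (σ : M ≃ₗ[ℝ] M) (A : M) : Prop :=
  σ A = A ∧ (∀ Z, σ Z = -Z → mul A Z = (2:ℝ)⁻¹ • Z) ∧
    ∀ Z, σ Z = -Z → ∃ c : ℝ, mul A (mul Z Z) = c • A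

variable {mul}

theorem PeirceAdapted.map {σ g : M ≃ₗ[ℝ] M} (hg : ∀ X Y, g (mul X Y) = mul (g X) (g Y))
    {A : M} (hA : PeirceAdapted mul σ A) : PeirceAdapted mul (g * σ * g⁻¹) (g A) := by
  obtain ⟨hfix, hhalf, hsq⟩ := hA
  have hanti : ∀ Z, (g * σ * g⁻¹) Z = -Z → σ (g.symm Z) = -g.symm Z := fun Z hZ => by
    simpa using congrArg g.symm hZ
  refine ⟨by simp [hfix], fun Z hZ => ?_, fun Z hZ => ?_⟩
  · rw [← g.apply_symm_apply Z, ← hg, hhalf _ (hanti Z hZ), map_smul]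
  · obtain ⟨c, hc⟩ := hsq _ (hanti Z hZ)
    exact ⟨c, by rw [← g.apply_symm_apply Z, ← hg, ← hg, hc, map_smul]⟩

theorem commute_of_apply_eq {σ g : M ≃ₗ[ℝ] M} {e : M}
    (hσ : ∀ X, σ X = X - (8:ℝ) • mul e X + (8:ℝ) • mul e (mul e X))
    (hg : ∀ X Y, g (mul X Y) = mul (g X) (g Y)) (he : g e = e) : Commute σ g := by
  refine LinearEquiv.ext fun X => ?_
  have hL : ∀ Y, g (mul e Y) = mul e (g Y) := fun Y => by rw [hg, he]
  simp only [LinearEquiv.mul_apply, hσ, map_add, map_sub, map_smul, hL]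

theorem commute_iff_apply_eq {σ g : M ≃ₗ[ℝ] M} {e : M}
    (hσ : ∀ X, σ X = X - (8:ℝ) • mul e X + (8:ℝ) • mul e (mul e X))
    (he : PeirceAdapted mul σ e) (huniq : ∀ A, PeirceAdapted mul σ A → A = e)
    (hg : ∀ X Y, g (mul X Y) = mul (g X) (g Y)) : Commute σ g ↔ g e = e := by
  refine ⟨fun hc => huniq _ ?_, commute_of_apply_eq hσ hg⟩
  have hconj : g * σ * g⁻¹ = σ := by rw [← hc.eq, mul_inv_cancel_right]
  simpa [hconj] using he.map hg

end PeirceAdapted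

@[simp] theorem omul_zero (x : Oct) : omul x 0 = 0 := by simp [omul]
@[simp] theorem zero_omul (x : Oct) : omul 0 x = 0 := by simp [omul]
@[simp] theorem omul_oone (x : Oct) : omul x oone = x := by simp [omul, oone]
@[simp] theorem oone_omul (x : Oct) : omul oone x = x := by simp [omul, oone]

@[simp] theorem oinner_zero_left (x : Oct) : oinner 0 x = 0 := by
  simp [oinner, Quaternion.re_zero]
@[simp] theorem oinner_zero_right (x : Oct) : oinner x 0 = 0 := by
  simp [oinner, Quaternion.re_zero]
@[simp] theorem oinner_oone_oone : oinner oone oone = 1 := by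
  simp [oinner, oone, Quaternion.re_zero, Quaternion.re_one]

@[simp] theorem smul_oone_eq_oone_iff {r : ℝ} : r • oone = oone ↔ r = 1 := by
  simp only [oone, Prod.smul_mk, smul_zero, Prod.mk.injEq, and_true, ← Quaternion.coe_one,
    Quaternion.smul_coe, Quaternion.coe_inj, mul_one]

@[simp] theorem oconj_zero : oconj 0 = 0 := by simp [oconj]
@[simp] theorem oconj_eq_zero_iff {x : Oct} : oconj x = 0 ↔ x = 0 := by
  simp [oconj, Prod.ext_iff]
@[simp] theorem oconj_add (x y : Oct) : oconj (x + y) = oconj x + oconj y := by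
  simp [oconj, add_comm]
@[simp] theorem oconj_sub (x y : Oct) : oconj (x - y) = oconj x - oconj y := by
  simp [oconj, sub_eq_add_neg, add_comm]
@[simp] theorem oconj_smul (r : ℝ) (x : Oct) : oconj (r • x) = r • oconj x := by
  simp [oconj]
@[simp] theorem oconj_neg (x : Oct) : oconj (-x) = -oconj x := by simp [oconj]

theorem oconj_omul (x y : Oct) : oconj (omul x y) = omul (oconj y) (oconj x) := by
  simp only [oconj, omul, star_sub, star_mul, star_star, star_neg, Prod.mk.injEq,
    neg_add, neg_mul, mul_neg, neg_neg]
  exact ⟨trivial, by abel⟩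

@[simp] theorem oinner_oconj (x y : Oct) : oinner (oconj x) (oconj y) = oinner x y := by
  simp [oconj, oinner, Quaternion.re_mul, Quaternion.re_star, Quaternion.imI_star,
    Quaternion.imJ_star, Quaternion.imK_star]

theorem sigma1_apply (X : J1) : sigma1 X = (X.1, (X.2.1, -X.2.2.1, -X.2.2.2)) := by
  simp [sigma1, phi0, negOct]

theorem sigma1_eq_neg_iff {Z : J1} : sigma1 Z = -Z ↔ Z.1 = 0 ∧ Z.2.1 = 0 := by
  simp [sigma1_apply, Prod.ext_iff, eq_neg_iff_add_eq_zero, ← two_smul ℝ]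

theorem sigma1_eq_self_iff {Z : J1} : sigma1 Z = Z ↔ Z.2.2.1 = 0 ∧ Z.2.2.2 = 0 := by
  simp [sigma1_apply, Prod.ext_iff, neg_eq_iff_add_eq_zero, ← two_smul ℝ]

theorem jmul_jE1 (X : J1) : jmul jE1 X =
    ((X.1.1, 0, 0), (0, (2:ℝ)⁻¹ • X.2.2.1, (2:ℝ)⁻¹ • X.2.2.2)) := by
  simp [jmul, jE1, jmk, ja1, ja2, ja3, jx1, jx2, jx3]

/- `jmul jE1` has the eigenvalues `1, 0, 1/2`, at which `1 - 8t + 8t²` takes the values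
`1, 1, -1`. -/
theorem sigma1_eq_poly (X : J1) :
    sigma1 X = X - (8:ℝ) • jmul jE1 X + (8:ℝ) • jmul jE1 (jmul jE1 X) := by
  rw [sigma1_apply, jmul_jE1, jmul_jE1]
  ext <;> simp <;> ring

theorem peirceAdapted_jE1 : PeirceAdapted jmul sigma1 jE1 := by
  refine ⟨by simp [sigma1_eq_self_iff, jE1, jmk], fun Z hZ => ?_, fun Z hZ => ?_⟩
  · obtain ⟨h1, h2⟩ := sigma1_eq_neg_iff.mp hZ
    simp [jmul_jE1, Prod.ext_iff, h1, h2]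
  · obtain ⟨⟨a, b, c⟩, x, y, z⟩ := Z
    obtain ⟨⟨rfl, rfl, rfl⟩, rfl⟩ : (a = 0 ∧ b = 0 ∧ c = 0) ∧ x = 0 := by
      simpa using sigma1_eq_neg_iff.mp hZ
    refine ⟨ja1 (jmul ((0, 0, 0), 0, y, z) ((0, 0, 0), 0, y, z)), ?_⟩
    rw [jmul_jE1]
    simp [jmul, jmk, ja1, ja2, ja3, jx1, jx2, jx3, jE1]

theorem eq_jE1_of_peirceAdapted {A : J1} (hA : PeirceAdapted jmul sigma1 A) : A = jE1 := by
  obtain ⟨hfix, hhalf, hsq⟩ := hA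
  obtain ⟨⟨a, b, c⟩, x, y, z⟩ := A
  obtain ⟨rfl, rfl⟩ : y = 0 ∧ z = 0 := sigma1_eq_self_iff.mp hfix
  have hF2 : sigma1 (jF2 oone) = -jF2 oone := sigma1_eq_neg_iff.mpr (by simp [jF2, jmk])
  have hF3 : sigma1 (jF3 oone) = -jF3 oone := sigma1_eq_neg_iff.mpr (by simp [jF3, jmk])
  obtain ⟨hca, rfl⟩ : c + a = 1 ∧ x = 0 := by
    simpa [jmul, jmk, ja1, ja2, ja3, jx1, jx2, jx3, jF2] using hhalf _ hF2
  have hab : a + b = 1 := by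
    simpa [jmul, jmk, ja1, ja2, ja3, jx1, jx2, jx3, jF3] using hhalf _ hF3
  obtain ⟨t, ht⟩ := hsq _ hF3
  obtain ⟨-, hb, htc⟩ : -a = t * a ∧ -b = t * b ∧ (t = 0 ∨ c = 0) := by
    simpa [jmul, jmk, ja1, ja2, ja3, jx1, jx2, jx3, jF3] using ht
  have hc : c = 0 := htc.elim (fun ht0 => by subst ht0; linarith) id
  obtain ⟨rfl, rfl, rfl⟩ : a = 1 ∧ b = 0 ∧ c = 0 := by refine ⟨?_, ?_, hc⟩ <;> linarith
  rfl

theorem sigma2_apply (X : J1) : sigma2 X = (X.1, (-X.2.1, X.2.2.1, -X.2.2.2)) := by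
  simp [sigma2, phi0, negOct]

theorem sigma2_eq_neg_iff {Z : J1} : sigma2 Z = -Z ↔ Z.1 = 0 ∧ Z.2.2.1 = 0 := by
  simp [sigma2_apply, Prod.ext_iff, eq_neg_iff_add_eq_zero, ← two_smul ℝ]

theorem sigma2_eq_self_iff {Z : J1} : sigma2 Z = Z ↔ Z.2.1 = 0 ∧ Z.2.2.2 = 0 := by
  simp [sigma2_apply, Prod.ext_iff, neg_eq_iff_add_eq_zero, ← two_smul ℝ]

theorem jmul_jE2 (X : J1) : jmul jE2 X =
    ((0, X.1.2.1, 0), ((2:ℝ)⁻¹ • X.2.1, 0, (2:ℝ)⁻¹ • X.2.2.2)) := by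
  simp [jmul, jE2, jmk, ja1, ja2, ja3, jx1, jx2, jx3]

theorem sigma2_eq_poly (X : J1) :
    sigma2 X = X - (8:ℝ) • jmul jE2 X + (8:ℝ) • jmul jE2 (jmul jE2 X) := by
  rw [sigma2_apply, jmul_jE2, jmul_jE2]
  ext <;> simp <;> ring

theorem peirceAdapted_jE2 : PeirceAdapted jmul sigma2 jE2 := by
  refine ⟨by simp [sigma2_eq_self_iff, jE2, jmk], fun Z hZ => ?_, fun Z hZ => ?_⟩
  · obtain ⟨h1, h2⟩ := sigma2_eq_neg_iff.mp hZ
    simp [jmul_jE2, Prod.ext_iff, h1, h2]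
  · obtain ⟨⟨a, b, c⟩, x, y, z⟩ := Z
    obtain ⟨⟨rfl, rfl, rfl⟩, rfl⟩ : (a = 0 ∧ b = 0 ∧ c = 0) ∧ y = 0 := by
      simpa using sigma2_eq_neg_iff.mp hZ
    refine ⟨ja2 (jmul ((0, 0, 0), x, 0, z) ((0, 0, 0), x, 0, z)), ?_⟩
    rw [jmul_jE2]
    simp [jmul, jmk, ja1, ja2, ja3, jx1, jx2, jx3, jE2]

theorem eq_jE2_of_peirceAdapted {A : J1} (hA : PeirceAdapted jmul sigma2 A) : A = jE2 := by
  obtain ⟨hfix, hhalf, hsq⟩ := hA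
  obtain ⟨⟨a, b, c⟩, x, y, z⟩ := A
  obtain ⟨rfl, rfl⟩ : x = 0 ∧ z = 0 := sigma2_eq_self_iff.mp hfix
  have hF1 : sigma2 (jF1 oone) = -jF1 oone := sigma2_eq_neg_iff.mpr (by simp [jF1, jmk])
  have hF3 : sigma2 (jF3 oone) = -jF3 oone := sigma2_eq_neg_iff.mpr (by simp [jF3, jmk])
  obtain ⟨hbc, rfl⟩ : b + c = 1 ∧ y = 0 := by
    simpa [jmul, jmk, ja1, ja2, ja3, jx1, jx2, jx3, jF1] using hhalf _ hF1
  have hab : a + b = 1 := by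
    simpa [jmul, jmk, ja1, ja2, ja3, jx1, jx2, jx3, jF3] using hhalf _ hF3
  obtain ⟨t, ht⟩ := hsq _ hF3
  obtain ⟨ha, -, htc⟩ : -a = t * a ∧ -b = t * b ∧ (t = 0 ∨ c = 0) := by
    simpa [jmul, jmk, ja1, ja2, ja3, jx1, jx2, jx3, jF3] using ht
  have hc : c = 0 := htc.elim (fun ht0 => by subst ht0; linarith) id
  obtain ⟨rfl, rfl, rfl⟩ : a = 0 ∧ b = 1 ∧ c = 0 := by refine ⟨?_, ?_, hc⟩ <;> linarith
  rfl

theorem commute_sigma1_iff {g : J1 ≃ₗ[ℝ] J1} (hg : g ∈ F4) : Commute sigma1 g ↔ g jE1 = jE1 :=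
  commute_iff_apply_eq sigma1_eq_poly peirceAdapted_jE1 (fun _ => eq_jE1_of_peirceAdapted) hg

theorem commute_sigma2_iff {g : J1 ≃ₗ[ℝ] J1} (hg : g ∈ F4) : Commute sigma2 g ↔ g jE2 = jE2 :=
  commute_iff_apply_eq sigma2_eq_poly peirceAdapted_jE2 (fun _ => eq_jE2_of_peirceAdapted) hg

/- Index `1` cannot be exchanged with another one in this way: `F¹₁` enters the twisted product
with the opposite sign. -/
def swap23 : J1 ≃ₗ[ℝ] J1 where
  toFun X := ((X.1.1, X.1.2.2, X.1.2.1), (oconj X.2.1, oconj X.2.2.2, oconj X.2.2.1))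
  invFun X := ((X.1.1, X.1.2.2, X.1.2.1), (oconj X.2.1, oconj X.2.2.2, oconj X.2.2.1))
  map_add' X Y := by simp
  map_smul' r X := by simp
  left_inv X := by simp [oconj_oconj]
  right_inv X := by simp [oconj_oconj]

theorem swap23_apply (X : J1) : swap23 X =
    ((X.1.1, X.1.2.2, X.1.2.1), (oconj X.2.1, oconj X.2.2.2, oconj X.2.2.1)) := rfl

theorem swap23_inv : swap23⁻¹ = swap23 :=
  inv_eq_of_mul_eq_one_left (LinearEquiv.ext fun X => by simp [swap23_apply, oconj_oconj])

theorem swap23_jE2 : swap23 jE2 = jE3 := by simp [swap23_apply, jE2, jE3, jmk]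

theorem swap23_jE3 : swap23 jE3 = jE2 := by simp [swap23_apply, jE2, jE3, jmk]

theorem swap23_mem_F4 : swap23 ∈ F4 := fun X Y => by
  simp only [swap23_apply, jmul, jmk, ja1, ja2, ja3, jx1, jx2, jx3, oconj_add, oconj_sub,
    oconj_smul, oconj_omul, oconj_oconj, oinner_oconj, smul_add, smul_sub, Prod.mk.injEq]
  refine ⟨⟨by ring, trivial⟩, ?_, ?_, ?_⟩ <;> module

theorem sigma3_apply (X : J1) : sigma3 X = (X.1, (-X.2.1, -X.2.2.1, X.2.2.2)) := by
  simp [sigma3, phi0, negOct]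

theorem swap23_conj_sigma3 : swap23 * sigma3 * swap23⁻¹ = sigma2 :=
  LinearEquiv.ext fun X => by
    simp [swap23_inv, swap23_apply, sigma2_apply, sigma3_apply, oconj_oconj]

theorem commute_sigma3_iff {g : J1 ≃ₗ[ℝ] J1} (hg : g ∈ F4) : Commute sigma3 g ↔ g jE3 = jE3 := by
  have hconj : swap23 * g * swap23⁻¹ ∈ F4 :=
    F4.mul_mem (F4.mul_mem swap23_mem_F4 hg) (F4.inv_mem swap23_mem_F4)
  rw [← Commute.conj_iff swap23, swap23_conj_sigma3, commute_sigma2_iff hconj,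
    LinearEquiv.mul_apply, LinearEquiv.mul_apply, swap23_inv, swap23_jE2, ← swap23_jE3,
    EmbeddingLike.apply_eq_iff_eq]

theorem mem_fixSubgroup {g : J1 ≃ₗ[ℝ] J1} {v : J1} : g ∈ fixSubgroup v ↔ g v = v := Iff.rfl

theorem map_conj_F4_inf_fixSubgroup {τ : J1 ≃ₗ[ℝ] J1} (hτ : τ ∈ F4) (v : J1) :
    (F4 ⊓ fixSubgroup v).map (MulAut.conj τ : (J1 ≃ₗ[ℝ] J1) →* (J1 ≃ₗ[ℝ] J1)) =
      F4 ⊓ fixSubgroup (τ v) := by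
  ext g
  rw [Subgroup.map_equiv_eq_comap_symm, Subgroup.mem_comap]
  simp [Subgroup.mem_inf, mem_fixSubgroup, MulAut.conj_symm_apply,
    Subgroup.mul_mem_cancel_right F4 hτ, Subgroup.mul_mem_cancel_left F4 (inv_mem hτ),
    LinearEquiv.symm_apply_eq]

/-- **Proposition (spn-14).** For each `i ∈ {1,2,3}`, the fixed subgroup of the
involution `g ↦ σᵢ g σᵢ` of `F₄₍₋₂₀₎` is the stabilizer of `Eᵢ`:
`(F₄₍₋₂₀₎)^{σ̃ᵢ} = (F₄₍₋₂₀₎)_{Eᵢ}`. In particular `K = (F₄₍₋₂₀₎)_{E₁} = Spin(9)` and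
`(F₄₍₋₂₀₎)^{σ̃₂} = (F₄₍₋₂₀₎)_{E₂} ≅ Spin⁰(8,1) = (F₄₍₋₂₀₎)_{E₃}`. -/
theorem stmt_18 :
    (∀ g, g ∈ F4 → (sigma1 * g = g * sigma1 ↔ g jE1 = jE1)) ∧
    (∀ g, g ∈ F4 → (sigma2 * g = g * sigma2 ↔ g jE2 = jE2)) ∧
    (∀ g, g ∈ F4 → (sigma3 * g = g * sigma3 ↔ g jE3 = jE3)) ∧
    Nonempty (↥(F4 ⊓ fixSubgroup jE2) ≃* ↥(F4 ⊓ fixSubgroup jE3)) := by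
  refine ⟨fun _ => commute_sigma1_iff, fun _ => commute_sigma2_iff, fun _ => commute_sigma3_iff,
    ⟨((MulAut.conj swap23).subgroupMap _).trans (MulEquiv.subgroupCongr ?_)⟩⟩
  rw [map_conj_F4_inf_fixSubgroup swap23_mem_F4, swap23_jE2]
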